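/- arXiv:1609.00118 — 2 statements merged into one kernel-verified Lean document; each statement's English description precedes it below -/
import Mathlib

section
/- Isolation: assuming sequential composition distributes over non-empty meets on the left (conjunctivity), c^ω = c^* ⊓ c^∞, i.e., possibly-infinite iteration is the choice between finite iteration and infinite iteration. -/
/-- A Concurrent Refinement Algebra over a complete distributive lattice of
commands, ordered by refinement (`⊓` = nondeterministic choice, `⊥` = abort,
`⊤` = magic), with sequential composition `seq` (identity `nil`),
synchronous parallel `par`, weak conjunction `conj`, a Boolean-style
sub-lattice of atomic steps `Atomic` (with `eps` the environment-step identity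
of `par`) and a sub-lattice of tests `Test`. -/
structure CRA (C : Type*) [CompleteDistribLattice C] where
  seq : C → C → C
  par : C → C → C
  conj : C → C → C
  nil : C
  eps : C
  Atomic : C → Prop
  Test : C → Prop
  seq_assoc : ∀ a b c, seq (seq a b) c = seq a (seq b c)
  seq_nil : ∀ c, seq c nil = c
  nil_seq : ∀ c, seq nil c = c
  seq_mono_left : ∀ d : C, Monotone fun c => seq c d
  seq_mono_right : ∀ c : C, Monotone (seq c)
  top_seq : ∀ c, seq ⊤ c = ⊤
  bot_seq : ∀ c, seq ⊥ c = ⊥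
  /-- sequential composition distributes over arbitrary choices on the right -/
  seq_sInf_distrib : ∀ (S : Set C) (d : C), seq (sInf S) d = ⨅ c ∈ S, seq c d
  par_assoc : ∀ a b c, par (par a b) c = par a (par b c)
  par_comm : ∀ a b, par a b = par b a
  /-- parallel distributes over arbitrary choices -/
  par_sInf_distrib : ∀ (c : C) (S : Set C), par c (sInf S) = ⨅ d ∈ S, par c d
  nil_par_nil : par nil nil = nil
  atomic_par : ∀ a b, Atomic a → Atomic b → Atomic (par a b)
  /-- synchronous interchange law for atomic steps -/
  interchange : ∀ a b c d, Atomic a → Atomic b →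
    par (seq a c) (seq b d) = seq (par a b) (par c d)
  par_atomic_seq_nil : ∀ a c, Atomic a → par (seq a c) nil = ⊤
  atomic_eps : Atomic eps
  /-- `eps` is the identity of parallel on atomic steps -/
  eps_par_atomic : ∀ a, Atomic a → par eps a = a
  conj_assoc : ∀ a b c, conj (conj a b) c = conj a (conj b c)
  conj_comm : ∀ a b, conj a b = conj b a
  conj_idem : ∀ a, conj a a = a
  conj_bot : ∀ c, conj c ⊥ = ⊥
  conj_atomic : ∀ a b, Atomic a → Atomic b → conj a b = a ⊔ b
  conj_test : ∀ t t', Test t → Test t' → conj t t' = t ⊔ t'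
  conj_interchange : ∀ a b c d, Atomic a → Atomic b →
    conj (seq a c) (seq b d) = seq (conj a b) (conj c d)
  conj_atomic_seq_nil : ∀ a c, Atomic a → conj (seq a c) nil = ⊤
  conj_sInf_distrib : ∀ (c : C) (S : Set C), S.Nonempty →
    conj c (sInf S) = ⨅ d ∈ S, conj c d
  atomic_conj : ∀ a b, Atomic a → Atomic b → Atomic (conj a b)
  test_nil : Test nil
  test_nil_le : ∀ t, Test t → nil ≤ t
  test_seq_par_interchange : ∀ t t' c d, Test t → Test t' →
    par (seq t c) (seq t' d) = seq (t ⊔ t') (par c d)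
  conj_test_interchange : ∀ t t' c d, Test t → Test t' →
    conj (seq t c) (seq t' d) = seq (t ⊔ t') (conj c d)

namespace CRA

variable {C : Type*} [CompleteDistribLattice C] (A : CRA C)

/-- possibly infinite iteration `c^ω = μ x. nil ⊓ c;x` -/
def omega (c : C) : C :=
  OrderHom.lfp ⟨fun x => A.nil ⊓ A.seq c x,
    fun _ _ h => inf_le_inf_left _ (A.seq_mono_right c h)⟩

/-- finite iteration `c^* = ν x. nil ⊓ c;x` -/
def star (c : C) : C :=
  OrderHom.gfp ⟨fun x => A.nil ⊓ A.seq c x,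
    fun _ _ h => inf_le_inf_left _ (A.seq_mono_right c h)⟩

/-- infinite iteration `c^∞ = c^ω ; ⊤` -/
def inft (c : C) : C := A.seq (A.omega c) ⊤

/-- finite powers: `c^0 = nil`, `c^(i+1) = c ; c^i` -/
def pow (c : C) : ℕ → C
  | 0 => A.nil
  | n + 1 => A.seq c (pow c n)

end CRA

/-!
`c^ω ≤ c^*` as a least versus a greatest fixed point, and `c^ω = c^ω;nil ≤ c^ω;⊤`.
Conversely, let `L = μx. c;x`. Then `c^ω ≤ nil ⊓ L` and `L;⊤ = L;⊥;⊤ = L`, hence `c^∞ ≤ L`.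
Conjunctivity of `c` makes the Heyting implication `c^* ⇨ c^ω` a prefixed point of `c;·`,
so `L ≤ c^* ⇨ c^ω`, i.e. `c^* ⊓ c^∞ ≤ c^* ⊓ L ≤ c^ω`.
-/

namespace CRA

variable {C : Type*} [CompleteDistribLattice C] (A : CRA C)

theorem seq_inf_left (a b d : C) : A.seq (a ⊓ b) d = A.seq a d ⊓ A.seq b d := by
  simpa only [sInf_pair, iInf_pair] using A.seq_sInf_distrib {a, b} d

def iterStep (c : C) : C →o C :=
  ⟨fun x => A.nil ⊓ A.seq c x, fun _ _ h => inf_le_inf_left _ (A.seq_mono_right c h)⟩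

theorem nil_inf_seq_omega (c : C) : A.nil ⊓ A.seq c (A.omega c) = A.omega c :=
  (A.iterStep c).map_lfp

theorem omega_le {c x : C} (h : A.nil ⊓ A.seq c x ≤ x) : A.omega c ≤ x :=
  (A.iterStep c).lfp_le h

theorem nil_inf_seq_star (c : C) : A.nil ⊓ A.seq c (A.star c) = A.star c :=
  (A.iterStep c).map_gfp

theorem omega_le_star (c : C) : A.omega c ≤ A.star c :=
  (A.iterStep c).lfp_le_gfp

theorem omega_le_inft (c : C) : A.omega c ≤ A.inft c :=
  calc A.omega c = A.seq (A.omega c) A.nil := (A.seq_nil _).symm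
    _ ≤ A.seq (A.omega c) ⊤ := A.seq_mono_right _ le_top

def seqHom (c : C) : C →o C :=
  ⟨A.seq c, A.seq_mono_right c⟩

def infIter (c : C) : C :=
  (A.seqHom c).lfp

theorem seq_infIter (c : C) : A.seq c (A.infIter c) = A.infIter c :=
  (A.seqHom c).map_lfp

theorem infIter_le {c x : C} (h : A.seq c x ≤ x) : A.infIter c ≤ x :=
  (A.seqHom c).lfp_le h

theorem infIter_seq_bot (c : C) : A.seq (A.infIter c) ⊥ = A.infIter c := by
  refine le_antisymm ?_ (A.infIter_le ?_)
  · calc A.seq (A.infIter c) ⊥ ≤ A.seq (A.infIter c) A.nil := A.seq_mono_right _ bot_le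
      _ = A.infIter c := A.seq_nil _
  · rw [← A.seq_assoc, A.seq_infIter]

theorem infIter_seq (c d : C) : A.seq (A.infIter c) d = A.infIter c := by
  rw [← A.infIter_seq_bot, A.seq_assoc, A.bot_seq]

theorem omega_le_nil_inf_infIter (c : C) : A.omega c ≤ A.nil ⊓ A.infIter c :=
  A.omega_le <| inf_le_inf_left _ <|
    calc A.seq c (A.nil ⊓ A.infIter c) ≤ A.seq c (A.infIter c) := A.seq_mono_right c inf_le_right
      _ = A.infIter c := A.seq_infIter c

theorem inft_le_infIter (c : C) : A.inft c ≤ A.infIter c :=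
  calc A.inft c ≤ A.seq (A.nil ⊓ A.infIter c) ⊤ := A.seq_mono_left ⊤ (A.omega_le_nil_inf_infIter c)
    _ = A.infIter c := by rw [seq_inf_left, nil_seq, infIter_seq, top_inf_eq]

variable {A} {c : C}

theorem infIter_le_star_himp_omega (hc : ∀ a b, A.seq c (a ⊓ b) = A.seq c a ⊓ A.seq c b) :
    A.infIter c ≤ A.star c ⇨ A.omega c := by
  refine A.infIter_le (le_himp_iff'.mpr ?_)
  calc A.star c ⊓ A.seq c (A.star c ⇨ A.omega c)
      = A.nil ⊓ A.seq c (A.star c) ⊓ A.seq c (A.star c ⇨ A.omega c) := by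
        rw [A.nil_inf_seq_star]
    _ = A.nil ⊓ A.seq c (A.star c ⊓ (A.star c ⇨ A.omega c)) := by rw [inf_assoc, hc]
    _ ≤ A.nil ⊓ A.seq c (A.omega c) := inf_le_inf_left _ (A.seq_mono_right c inf_himp_le)
    _ = A.omega c := A.nil_inf_seq_omega c

theorem omega_eq_star_inf_inft (hc : ∀ a b, A.seq c (a ⊓ b) = A.seq c a ⊓ A.seq c b) :
    A.omega c = A.star c ⊓ A.inft c := by
  refine le_antisymm (le_inf (A.omega_le_star c) (A.omega_le_inft c)) ?_
  calc A.star c ⊓ A.inft c ≤ A.star c ⊓ A.infIter c := inf_le_inf_left _ (A.inft_le_infIter c)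
    _ ≤ A.omega c := le_himp_iff'.mp (infIter_le_star_himp_omega hc)

end CRA

theorem isolation {C : Type*} [CompleteDistribLattice C] (A : CRA C)
    (hconj : ∀ (c : C) (S : Set C), S.Nonempty → A.seq c (sInf S) = ⨅ d ∈ S, A.seq c d) (c : C) :
    A.omega c = A.star c ⊓ A.inft c :=
  A.omega_eq_star_inf_inft fun a b => by
    simpa only [sInf_pair, iInf_pair] using hconj c {a, b} (Set.insert_nonempty a {b})
end

section
/- For any test t and atomic step a, the weak conjunction of the iterated step with the test collapses to the test: a^ω ⋓ t = t. -/
/-! Unfolding `a^ω = nil ⊓ a ; a^ω` and distributing `⋓ t` over the choice leaves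
`nil ⋓ t = t` and `(a ; a^ω) ⋓ t`; the latter refines `(a ; a^ω) ⋓ nil = ⊤` because
`nil ≤ t`, so it is `⊤` and drops out of the meet. -/

namespace CRA

variable {C : Type*} [CompleteDistribLattice C] (A : CRA C)

theorem conj_inf (c x y : C) : A.conj c (x ⊓ y) = A.conj c x ⊓ A.conj c y := by
  rw [← sInf_pair, A.conj_sInf_distrib c {x, y} (Set.insert_nonempty x {y}), iInf_pair]

theorem inf_conj (x y c : C) : A.conj (x ⊓ y) c = A.conj x c ⊓ A.conj y c := by
  rw [A.conj_comm, conj_inf, A.conj_comm c, A.conj_comm c]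

theorem conj_mono_right (c : C) : Monotone (A.conj c) := fun x y hxy => by
  rw [← inf_eq_left.mpr hxy, conj_inf]
  exact inf_le_right

theorem omega_unfold (c : C) : A.omega c = A.nil ⊓ A.seq c (A.omega c) :=
  (OrderHom.map_lfp _).symm

theorem conj_atomic_seq_eq_top_of_nil_le {a : C} (ha : A.Atomic a) (c : C) {d : C}
    (hd : A.nil ≤ d) : A.conj (A.seq a c) d = ⊤ :=
  top_unique <| A.conj_atomic_seq_nil a c ha ▸ A.conj_mono_right _ hd

end CRA

theorem omega_conj_test_general {C : Type*} [CompleteDistribLattice C] (A : CRA C)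
    (hnil : ∀ t, A.Test t → A.conj A.nil t = t)
    (a t : C) (ha : A.Atomic a) (ht : A.Test t) :
    A.conj (A.omega a) t = t := by
  rw [A.omega_unfold, A.inf_conj, hnil t ht,
    A.conj_atomic_seq_eq_top_of_nil_le ha _ (A.test_nil_le t ht), inf_top_eq]

theorem omega_conj_test {C : Type*} [CompleteDistribLattice C] (A : CRA C)
    (hnil : ∀ t, A.Test t → A.conj A.nil t = t)
    (habs : ∀ t, A.Test t → t ⊓ A.seq t ⊤ = t)
    (a t : C) (ha : A.Atomic a) (ht : A.Test t) :
    A.conj (A.omega a) t = t :=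
  omega_conj_test_general A hnil a t ha ht
end
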